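/- arXiv:1102.0270 — 3 statements merged into one kernel-verified Lean document; each statement's English description precedes it below -/
import Mathlib

section
/- For a finite weighted graph G with Cheeger constant h, the second-smallest eigenvalue λ of the normalized graph Laplacian satisfies λ ≥ h²/2. -/
/-!
Shift `f` by a weighted median `m` and split `f - m` into its positive and negative parts. Since
`f` is `d`-orthogonal to the constants, the shift only increases `∑ f² d`, and the splitting only
decreases the Dirichlet energy, so it suffices to bound the energy of a function `ψ ≥ 0` whose
support has at most half the volume. Every superlevel set of `ψ²` then obeys
`h · vol S ≤ cut S`, and the coarea formula (`∑ σ d = ∫ vol {σ > t} dt`,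
`∑∑ w (σᵢ - σⱼ)⁺ = ∫ cut {σ > t} dt`) gives `h ∑ ψ² d ≤ ½ ∑∑ w |ψᵢ² - ψⱼ²|`.
Cauchy–Schwarz with `|ψᵢ² - ψⱼ²| = |ψᵢ + ψⱼ| |ψᵢ - ψⱼ|` and `∑∑ w (ψᵢ + ψⱼ)² ≤ 4 ∑ ψ² d`
turns this into `h² ∑ ψ² d ≤ ∑∑ w (ψᵢ - ψⱼ)²`.
-/

open Finset MeasureTheory

lemma sq_eq_posPart_sq_add_negPart_sq {α : Type*} [CommRing α] [LinearOrder α]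
    [IsStrictOrderedRing α] (a : α) : a ^ 2 = a⁺ ^ 2 + a⁻ ^ 2 := by
  rw [posPart_eq_ite, negPart_eq_ite]
  split_ifs <;> nlinarith

lemma posPart_sub_sq_add_negPart_sub_sq_le {α : Type*} [CommRing α] [LinearOrder α]
    [IsStrictOrderedRing α] (a b : α) : (a⁺ - b⁺) ^ 2 + (a⁻ - b⁻) ^ 2 ≤ (a - b) ^ 2 := by
  rw [posPart_eq_ite, posPart_eq_ite, negPart_eq_ite, negPart_eq_ite]
  split_ifs <;> nlinarith

lemma integrable_indicator_Ico_one (a b : ℝ) : Integrable ((Set.Ico a b).indicator (1 : ℝ → ℝ)) :=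
  (integrable_indicator_iff measurableSet_Ico).2 (integrableOn_const (by simp))

lemma integrable_sum_mul_indicator_Ico {ι : Type*} (s : Finset ι) (a l u : ι → ℝ) :
    Integrable (fun t => ∑ i ∈ s, a i * (Set.Ico (l i) (u i)).indicator 1 t) :=
  integrable_finsetSum _ fun _ _ => (integrable_indicator_Ico_one _ _).const_mul _

lemma integral_sum_mul_indicator_Ico {ι : Type*} (s : Finset ι) (a l u : ι → ℝ) :
    ∫ t, ∑ i ∈ s, a i * (Set.Ico (l i) (u i)).indicator 1 t = ∑ i ∈ s, a i * (u i - l i)⁺ := by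
  rw [integral_finsetSum _ fun _ _ => (integrable_indicator_Ico_one _ _).const_mul _]
  simp only [integral_const_mul, integral_indicator_one measurableSet_Ico, Real.volume_real_Ico]
  rfl

namespace WeightedGraph

variable {V : Type*}

def vol (d : V → ℝ) (S : Finset V) : ℝ := ∑ i ∈ S, d i

lemma vol_mono {d : V → ℝ} (hd : 0 ≤ d) {S T : Finset V} (hST : S ⊆ T) : vol d S ≤ vol d T :=
  sum_le_sum_of_subset_of_nonneg hST fun i _ _ => hd i

variable [Fintype V] {w : V → V → ℝ} {d : V → ℝ}

def cut [DecidableEq V] (w : V → V → ℝ) (S : Finset V) : ℝ := ∑ i ∈ S, ∑ j ∈ Sᶜ, w i j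

noncomputable def superlevel (σ : V → ℝ) (t : ℝ) : Finset V := univ.filter (t < σ ·)

@[simp] lemma mem_superlevel {σ : V → ℝ} {t : ℝ} {i : V} : i ∈ superlevel σ t ↔ t < σ i := by
  simp [superlevel]

lemma superlevel_sq_subset {ψ : V → ℝ} (hψ : 0 ≤ ψ) {t : ℝ} (ht : 0 ≤ t) :
    superlevel (ψ ^ 2) t ⊆ superlevel ψ 0 := by
  intro i hi
  rw [mem_superlevel, Pi.pow_apply] at hi
  exact mem_superlevel.2 ((hψ i).lt_of_ne fun h => hi.not_ge (by simp [← h, ht]))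

lemma exists_median [Nonempty V] (hd : 0 ≤ d) (f : V → ℝ) :
    ∃ m, 2 * vol d (superlevel f m) ≤ vol d univ ∧
      2 * vol d (univ.filter (f · < m)) ≤ vol d univ := by
  set T := univ.filter fun i => vol d univ ≤ 2 * vol d (univ.filter (f · ≤ f i))
  obtain ⟨imax, -, himax⟩ := exists_max_image univ f univ_nonempty
  have hT : T.Nonempty := ⟨imax, by
    simp only [T, mem_filter, mem_univ, true_and, filter_true_of_mem fun i _ => himax i (mem_univ i)]
    linarith [vol_mono hd (empty_subset univ), show vol d ∅ = 0 from sum_empty]⟩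
  obtain ⟨i0, hi0, hmin⟩ := T.exists_min_image f hT
  refine ⟨f i0, ?_, ?_⟩
  · have hsplit : vol d (superlevel f (f i0)) + vol d (univ.filter (f · ≤ f i0)) = vol d univ := by
      simp only [vol, superlevel, ← not_lt]
      exact sum_filter_add_sum_filter_not _ _ _
    linarith [(mem_filter.1 hi0).2]
  · rcases (univ.filter (f · < f i0)).eq_empty_or_nonempty with hempty | hne
    · rw [hempty, vol, sum_empty, mul_zero]
      exact sum_nonneg fun i _ => hd i
    -- `{f < f i0} ⊆ {f ≤ f i1}` for the largest value `f i1 < f i0`, and `i1 ∉ T` by minimality.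
    obtain ⟨i1, hi1, hmax⟩ := exists_max_image _ f hne
    have hi1T : i1 ∉ T := fun h => (hmin i1 h).not_gt (mem_filter.1 hi1).2
    simp only [T, mem_filter, mem_univ, true_and, not_le] at hi1T
    refine le_trans ?_ hi1T.le
    gcongr
    exact vol_mono hd fun i hi => mem_filter.2 ⟨mem_univ i, hmax i hi⟩

lemma sum_sq_mul_le_sum_sub_sq_mul (hd : 0 ≤ d) {f : V → ℝ}
    (hf : ∑ i, f i * d i = 0) (m : ℝ) : ∑ i, f i ^ 2 * d i ≤ ∑ i, (f i - m) ^ 2 * d i := by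
  have hexpand : ∑ i, (f i - m) ^ 2 * d i =
      ∑ i, f i ^ 2 * d i - 2 * m * ∑ i, f i * d i + m ^ 2 * ∑ i, d i := by
    simp only [mul_sum, ← sum_sub_distrib, ← sum_add_distrib]
    exact sum_congr rfl fun i _ => by ring
  rw [hexpand, hf]
  nlinarith [sum_nonneg fun i (_ : i ∈ univ) => hd i, sq_nonneg m]

lemma two_mul_sum_sum_mul_posPart_sub (hsymm : ∀ i j, w i j = w j i) (x : V → ℝ) :
    2 * ∑ i, ∑ j, w i j * (x i - x j)⁺ = ∑ i, ∑ j, w i j * |x i - x j| := by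
  have hswap : ∑ i, ∑ j, w i j * (x i - x j)⁺ = ∑ i, ∑ j, w i j * (x i - x j)⁻ := by
    rw [sum_comm]
    simp_rw [hsymm, ← posPart_neg, neg_sub]
  rw [two_mul]
  nth_rw 2 [hswap]
  simp only [← sum_add_distrib, ← mul_add, posPart_add_negPart]

lemma sq_sum_sum_mul_mul_le (hnn : ∀ i j, 0 ≤ w i j) (x y : V → V → ℝ) :
    (∑ i, ∑ j, w i j * (x i j * y i j)) ^ 2 ≤
      (∑ i, ∑ j, w i j * x i j ^ 2) * ∑ i, ∑ j, w i j * y i j ^ 2 := by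
  simp only [← Fintype.sum_prod_type']
  exact sum_sq_le_sum_mul_sum_of_sq_le_mul _ (fun p _ => mul_nonneg (hnn ..) (sq_nonneg _))
    (fun p _ => mul_nonneg (hnn ..) (sq_nonneg _)) (fun p _ => le_of_eq (by ring))

lemma sum_sum_mul_add_sq_le (hsymm : ∀ i j, w i j = w j i) (hnn : ∀ i j, 0 ≤ w i j)
    (hdeg : ∀ i, d i = ∑ j, w i j) (x : V → ℝ) :
    ∑ i, ∑ j, w i j * (x i + x j) ^ 2 ≤ 4 * ∑ i, x i ^ 2 * d i := by
  have hleft : ∑ i, ∑ j, w i j * x i ^ 2 = ∑ i, x i ^ 2 * d i := by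
    simp_rw [hdeg, mul_sum, mul_comm]
  have hright : ∑ i, ∑ j, w i j * x j ^ 2 = ∑ i, x i ^ 2 * d i := by
    rw [sum_comm, ← hleft]
    simp_rw [hsymm]
  calc ∑ i, ∑ j, w i j * (x i + x j) ^ 2
      ≤ ∑ i, ∑ j, (2 * (w i j * x i ^ 2) + 2 * (w i j * x j ^ 2)) := by
        gcongr with i _ j _
        nlinarith [hnn i j, mul_nonneg (hnn i j) (sq_nonneg (x i - x j))]
    _ = 4 * ∑ i, x i ^ 2 * d i := by
        simp only [sum_add_distrib, ← mul_sum, hleft, hright]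
        ring

lemma vol_superlevel_eq_sum_indicator (σ : V → ℝ) {t : ℝ} (ht : 0 ≤ t) :
    vol d (superlevel σ t) = ∑ i, d i * (Set.Ico 0 (σ i)).indicator 1 t := by
  simp [vol, superlevel, sum_filter, Set.indicator_apply, ht]

variable [DecidableEq V]

lemma cut_superlevel_eq_sum_indicator (σ : V → ℝ) (t : ℝ) :
    cut w (superlevel σ t) = ∑ i, ∑ j, w i j * (Set.Ico (σ j) (σ i)).indicator 1 t := by
  simp only [cut, superlevel, sum_filter, Set.indicator_apply, Set.mem_Ico, Pi.one_apply, mul_ite,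
    mul_one, mul_zero]
  refine sum_congr rfl fun i _ => ?_
  split_ifs with hi <;> simp [hi, sum_filter]

theorem coarea_le {σ : V → ℝ} (hσ : 0 ≤ σ) {c : ℝ}
    (hlevel : ∀ t, 0 ≤ t → c * vol d (superlevel σ t) ≤ cut w (superlevel σ t)) :
    c * ∑ i, σ i * d i ≤ ∑ i, ∑ j, w i j * (σ i - σ j)⁺ := by
  have hpointwise : ∀ t, c * ∑ i, d i * (Set.Ico 0 (σ i)).indicator 1 t ≤
      ∑ i, ∑ j, w i j * (Set.Ico (σ j) (σ i)).indicator 1 t := by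
    intro t
    rcases le_or_gt 0 t with ht | ht
    · rw [← vol_superlevel_eq_sum_indicator σ ht, ← cut_superlevel_eq_sum_indicator]
      exact hlevel t ht
    · have hnot : ∀ a b, 0 ≤ a → (Set.Ico a b).indicator (1 : ℝ → ℝ) t = 0 := fun a b ha =>
        Set.indicator_of_notMem (fun hmem => (ht.trans_le ha).not_ge hmem.1) _
      simp [hnot 0 _ le_rfl, fun i j => hnot (σ j) (σ i) (hσ j)]
  simp only [← Fintype.sum_prod_type'] at hpointwise ⊢
  have hint := integral_mono ((integrable_sum_mul_indicator_Ico _ _ _ _).const_mul c)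
    (integrable_sum_mul_indicator_Ico _ _ _ _) hpointwise
  rw [integral_const_mul, integral_sum_mul_indicator_Ico, integral_sum_mul_indicator_Ico] at hint
  simpa [posPart_of_nonneg (hσ _), mul_comm] using hint

theorem sq_mul_sum_sq_mul_le_of_nonneg (hsymm : ∀ i j, w i j = w j i) (hnn : ∀ i j, 0 ≤ w i j)
    (hdeg : ∀ i, d i = ∑ j, w i j) {c : ℝ} (hc : 0 ≤ c) {ψ : V → ℝ} (hψ : 0 ≤ ψ)
    (hcut : ∀ S ⊆ superlevel ψ 0, c * vol d S ≤ cut w S) :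
    c ^ 2 * ∑ i, ψ i ^ 2 * d i ≤ ∑ i, ∑ j, w i j * (ψ i - ψ j) ^ 2 := by
  set D := ∑ i, ψ i ^ 2 * d i
  set E := ∑ i, ∑ j, w i j * (ψ i - ψ j) ^ 2
  have hcoarea : 2 * (c * D) ≤ ∑ i, ∑ j, w i j * (|ψ i + ψ j| * |ψ i - ψ j|) := by
    have := coarea_le (w := w) (σ := ψ ^ 2) (fun i => sq_nonneg (ψ i))
      (fun t ht => hcut _ (superlevel_sq_subset hψ ht))
    simp only [← abs_mul, ← sq_sub_sq, Pi.pow_apply] at this ⊢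
    rw [← two_mul_sum_sum_mul_posPart_sub hsymm]
    linarith
  have hCS := sq_sum_sum_mul_mul_le hnn (fun i j => |ψ i + ψ j|) (fun i j => |ψ i - ψ j|)
  simp only [sq_abs] at hCS
  have hE : 0 ≤ E := sum_nonneg fun i _ => sum_nonneg fun j _ => mul_nonneg (hnn i j) (sq_nonneg _)
  rcases le_or_gt D 0 with hD | hD
  · exact (mul_nonpos_of_nonneg_of_nonpos (sq_nonneg c) hD).trans hE
  · have hsq : (2 * (c * D)) ^ 2 ≤ 4 * D * E :=
      (pow_le_pow_left₀ (by positivity) hcoarea 2).trans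
        (hCS.trans (mul_le_mul_of_nonneg_right (sum_sum_mul_add_sq_le hsymm hnn hdeg ψ) hE))
    nlinarith

theorem sq_mul_sum_sq_mul_le_of_sum_mul_eq_zero [Nonempty V] (hsymm : ∀ i j, w i j = w j i)
    (hnn : ∀ i j, 0 ≤ w i j) (hdeg : ∀ i, d i = ∑ j, w i j) {c : ℝ} (hc : 0 ≤ c)
    (hcheeger : ∀ S, 2 * vol d S ≤ vol d univ → c * vol d S ≤ cut w S) {f : V → ℝ}
    (hf : ∑ i, f i * d i = 0) :
    c ^ 2 * ∑ i, f i ^ 2 * d i ≤ ∑ i, ∑ j, w i j * (f i - f j) ^ 2 := by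
  have hd : 0 ≤ d := fun i => hdeg i ▸ sum_nonneg fun j _ => hnn i j
  obtain ⟨m, hup, hlo⟩ := exists_median hd f
  set g : V → ℝ := fun i => f i - m
  have hsmall : ∀ T, 2 * vol d T ≤ vol d univ → ∀ S ⊆ T, c * vol d S ≤ cut w S :=
    fun T hT S hS => hcheeger S ((mul_le_mul_of_nonneg_left (vol_mono hd hS) two_pos.le).trans hT)
  have hpos := sq_mul_sum_sq_mul_le_of_nonneg hsymm hnn hdeg hc (posPart_nonneg g)
    fun S hS => hsmall _ hup S fun i hi => by
      simpa [g, posPart_pos_iff] using mem_superlevel.1 (hS hi)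
  have hneg := sq_mul_sum_sq_mul_le_of_nonneg hsymm hnn hdeg hc (negPart_nonneg g)
    fun S hS => hsmall _ hlo S fun i hi => by
      simpa [g, negPart_pos_iff] using mem_superlevel.1 (hS hi)
  calc c ^ 2 * ∑ i, f i ^ 2 * d i
      ≤ c ^ 2 * ∑ i, g i ^ 2 * d i :=
        mul_le_mul_of_nonneg_left (sum_sq_mul_le_sum_sub_sq_mul hd hf m) (sq_nonneg c)
    _ = c ^ 2 * ∑ i, g⁺ i ^ 2 * d i + c ^ 2 * ∑ i, g⁻ i ^ 2 * d i := by
        simp only [← mul_add, ← sum_add_distrib, ← add_mul, Pi.posPart_apply, Pi.negPart_apply,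
          ← sq_eq_posPart_sq_add_negPart_sq]
    _ ≤ ∑ i, ∑ j, w i j * (g⁺ i - g⁺ j) ^ 2 + ∑ i, ∑ j, w i j * (g⁻ i - g⁻ j) ^ 2 :=
        add_le_add hpos hneg
    _ ≤ ∑ i, ∑ j, w i j * (g i - g j) ^ 2 := by
        simp only [← sum_add_distrib, ← mul_add]
        gcongr with i _ j _
        · exact hnn i j
        · exact posPart_sub_sq_add_negPart_sub_sq_le (g i) (g j)
    _ = ∑ i, ∑ j, w i j * (f i - f j) ^ 2 := by simp only [g, sub_sub_sub_cancel_right]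

lemma mul_vol_le_cut_of_two_mul_vol_le (hdpos : ∀ i, 0 < d i) {h : ℝ}
    (hh : ∀ S : Finset V, S.Nonempty → S ≠ univ → h ≤ cut w S / min (vol d S) (vol d Sᶜ))
    {S : Finset V} (hS : 2 * vol d S ≤ vol d univ) : h * vol d S ≤ cut w S := by
  rcases S.eq_empty_or_nonempty with rfl | hne
  · simp [vol, cut]
  have hvol : 0 < vol d S := sum_pos (fun i _ => hdpos i) hne
  have hcompl : vol d S + vol d Sᶜ = vol d univ := sum_add_sum_compl S d
  have hSu : S ≠ univ := by
    rintro rfl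
    linarith
  have := hh S hne hSu
  rwa [min_eq_left (by linarith), le_div_iff₀ hvol] at this

end WeightedGraph

theorem cheeger_lower_bound_general
    {V : Type*} [Fintype V] [DecidableEq V] [Nonempty V]
    (w : V → V → ℝ) (d : V → ℝ)
    (hsymm : ∀ i j, w i j = w j i)
    (hnn : ∀ i j, 0 ≤ w i j)
    (hd : ∀ i, d i = w i i + ∑ j ∈ univ.erase i, w i j)
    (hdpos : ∀ i, 0 < d i)
    (h lam : ℝ)
    (hh : IsLeast {r : ℝ | ∃ S : Finset V, S.Nonempty ∧ S ≠ univ ∧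
      r = (∑ i ∈ S, ∑ j ∈ Sᶜ, w i j) /
        min (∑ i ∈ S, d i) (∑ j ∈ Sᶜ, d j)} h)
    (hlam : IsGLB {r : ℝ | ∃ f : V → ℝ, (∑ i, f i * d i) = 0 ∧ f ≠ 0 ∧
      r = ((1/2) * ∑ i, ∑ j, w i j * (f i - f j)^2) / (∑ i, (f i)^2 * d i)} lam) :
    h^2 / 2 ≤ lam := by
  have hdeg : ∀ i, d i = ∑ j, w i j := fun i => by rw [hd i, add_sum_erase _ _ (mem_univ i)]
  have hh0 : 0 ≤ h := by
    obtain ⟨S, -, -, rfl⟩ := hh.1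
    exact div_nonneg (sum_nonneg fun i _ => sum_nonneg fun j _ => hnn i j)
      (le_min (sum_nonneg fun i _ => (hdpos i).le) (sum_nonneg fun i _ => (hdpos i).le))
  have hcheeger : ∀ S, 2 * WeightedGraph.vol d S ≤ WeightedGraph.vol d univ →
      h * WeightedGraph.vol d S ≤ WeightedGraph.cut w S := fun S =>
    WeightedGraph.mul_vol_le_cut_of_two_mul_vol_le hdpos fun S hS hSu => hh.2 ⟨S, hS, hSu, rfl⟩
  refine hlam.2 ?_
  rintro _ ⟨f, hf, hf0, rfl⟩
  obtain ⟨i, hi⟩ := Function.ne_iff.1 hf0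
  have hD : 0 < ∑ i, f i ^ 2 * d i := sum_pos' (fun j _ => mul_nonneg (sq_nonneg _) (hdpos j).le)
    ⟨i, mem_univ i, mul_pos (sq_pos_of_ne_zero hi) (hdpos i)⟩
  rw [le_div_iff₀ hD]
  linarith [WeightedGraph.sq_mul_sum_sq_mul_le_of_sum_mul_eq_zero hsymm hnn hdeg hh0 hcheeger hf]

/-- **Weighted Cheeger inequality, lower bound** (Theorem A.2):
for a finite connected weighted graph, the second-smallest eigenvalue `lam` of the
normalized Laplacian (characterized as the infimum of the Rayleigh quotient over
functions orthogonal to the zero mode) satisfies `lam ≥ h²/2` where `h` is the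
Cheeger constant. -/
theorem cheeger_lower_bound
    {V : Type*} [Fintype V] [DecidableEq V] [Nonempty V]
    (w : V → V → ℝ) (d : V → ℝ)
    (hsymm : ∀ i j, w i j = w j i)
    (hnn : ∀ i j, 0 ≤ w i j)
    (hloop : ∀ i, 0 ≤ w i i)
    (hd : ∀ i, d i = w i i + ∑ j ∈ univ.erase i, w i j)
    (hdpos : ∀ i, 0 < d i)
    (hconn : ∀ S : Finset V, S.Nonempty → S ≠ univ →
      0 < ∑ i ∈ S, ∑ j ∈ Sᶜ, w i j)
    (h lam : ℝ)
    (hh : IsLeast {r : ℝ | ∃ S : Finset V, S.Nonempty ∧ S ≠ univ ∧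
      r = (∑ i ∈ S, ∑ j ∈ Sᶜ, w i j) /
        min (∑ i ∈ S, d i) (∑ j ∈ Sᶜ, d j)} h)
    (hlam : IsGLB {r : ℝ | ∃ f : V → ℝ, (∑ i, f i * d i) = 0 ∧ f ≠ 0 ∧
      r = ((1/2) * ∑ i, ∑ j, w i j * (f i - f j)^2) / (∑ i, (f i)^2 * d i)} lam) :
    h^2 / 2 ≤ lam :=
  cheeger_lower_bound_general w d hsymm hnn hd hdpos h lam hh hlam
end

section
/- In the flip graph of outer planar triangulations of the odd n-gon, every triangulation has a unique 'central triangle': a triangle Δ such that each of the three arcs of the polygon boundary determined by the vertices of Δ contains fewer than n/2 edges. -/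
/-- An outer planar triangulation of the based, oriented convex `n`-gon
(vertices `0, …, n−1` in order, no interior vertices), encoded as its set of
`n − 3` pairwise non-crossing diagonals. -/
def IsOPT (n : ℕ) (T : Finset (Fin n × Fin n)) : Prop :=
  (∀ p ∈ T, p.1 < p.2 ∧ p.1.val + 2 ≤ p.2.val ∧ ¬(p.1.val = 0 ∧ p.2.val = n - 1)) ∧
  (∀ p ∈ T, ∀ q ∈ T,
    ¬((p.1.val < q.1.val ∧ q.1.val < p.2.val ∧ p.2.val < q.2.val) ∨
      (q.1.val < p.1.val ∧ p.1.val < q.2.val ∧ q.2.val < p.2.val))) ∧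
  T.card = n - 3

/-- `a` and `b` (with `a < b`) are joined by an edge of the triangulated polygon:
either a boundary edge of the polygon or a diagonal of `T`. -/
def polyEdge (n : ℕ) (T : Finset (Fin n × Fin n)) (a b : Fin n) : Prop :=
  a.val + 1 = b.val ∨ (a.val = 0 ∧ b.val = n - 1) ∨ (a, b) ∈ T

/-!
Number the vertices `0, …, n - 1` and write a chord as `(a, b)` with `a < b`. Pairwise
noncrossing diagonals of an `n`-gon number at most `n - 3`, so in a triangulation every chord
that no diagonal crosses is a side of the triangulation.

Existence: every uncrossed chord `(a, b)` with `b ≥ a + 2` is the base of a triangle `(a, c, b)`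
with uncrossed sides. Starting from the chord `(0, n - 1)`, descend into a side longer than `n / 2`
as long as there is one; as `n` is odd, the triangle where this stops is central.

Uniqueness: the longest sides of two central triangles are both longer than `n / 2`, hence nested;
noncrossing with the short sides forces them to coincide, and then the apexes coincide too.
-/

def Crosses (p q : ℕ × ℕ) : Prop :=
  (p.1 < q.1 ∧ q.1 < p.2 ∧ p.2 < q.2) ∨ (q.1 < p.1 ∧ p.1 < q.2 ∧ q.2 < p.2)

def IsDiagonal (n : ℕ) (p : ℕ × ℕ) : Prop :=
  p.1 + 2 ≤ p.2 ∧ p.2 < n ∧ ¬(p.1 = 0 ∧ p.2 = n - 1)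

def Uncrossed (S : Finset (ℕ × ℕ)) (p : ℕ × ℕ) : Prop :=
  ∀ q ∈ S, ¬Crosses q p

structure IsTriangulation (n : ℕ) (S : Finset (ℕ × ℕ)) : Prop where
  isDiagonal : ∀ p ∈ S, IsDiagonal n p
  uncrossed : ∀ p ∈ S, Uncrossed S p
  card_eq : S.card = n - 3

def IsCentralTriangle (n : ℕ) (S : Finset (ℕ × ℕ)) (a c b : ℕ) : Prop :=
  a < c ∧ c < b ∧ b < n ∧ Uncrossed S (a, c) ∧ Uncrossed S (c, b) ∧ Uncrossed S (a, b) ∧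
    2 * (c - a) < n ∧ 2 * (b - c) < n ∧ 2 * (n - b + a) < n

lemma crosses_comm {p q : ℕ × ℕ} : Crosses p q ↔ Crosses q p := by
  unfold Crosses
  omega

lemma not_crosses_self (p : ℕ × ℕ) : ¬Crosses p p := by
  unfold Crosses
  omega

def AvoidsInterval (a b : ℕ) (p : ℕ × ℕ) : Prop :=
  (p.1 ≤ a ∨ b ≤ p.1) ∧ (p.2 ≤ a ∨ b ≤ p.2)

def contract (a b v : ℕ) : ℕ := if v ≤ a then v else v - (b - a - 1)

def contractPair (a b : ℕ) (p : ℕ × ℕ) : ℕ × ℕ := (contract a b p.1, contract a b p.2)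

section Contract

variable {a b : ℕ}

lemma contract_spec {v : ℕ} (hv : v ≤ a ∨ b ≤ v) :
    (v ≤ a ∧ contract a b v = v) ∨ (b ≤ v ∧ contract a b v + (b - a - 1) = v) := by
  unfold contract
  split_ifs <;> omega

lemma contractPair_injOn : Set.InjOn (contractPair a b) {p | AvoidsInterval a b p} := by
  rintro p ⟨hp₁, hp₂⟩ q ⟨hq₁, hq₂⟩ h
  simp only [contractPair, Prod.mk.injEq] at h
  have := contract_spec hp₁; have := contract_spec hp₂
  have := contract_spec hq₁; have := contract_spec hq₂
  ext <;> omega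

lemma isDiagonal_contractPair {n : ℕ} {p : ℕ × ℕ} (hab : a < b) (hbn : b < n)
    (hp : IsDiagonal n p) (hpab : p ≠ (a, b)) (havoid : AvoidsInterval a b p) :
    IsDiagonal (n - (b - a - 1)) (contractPair a b p) := by
  obtain ⟨hp₁, hp₂⟩ := havoid
  have := contract_spec hp₁; have := contract_spec hp₂
  have : ¬(p.1 = a ∧ p.2 = b) := fun h => hpab (Prod.ext h.1 h.2)
  unfold IsDiagonal at hp ⊢
  simp only [contractPair]
  omega

lemma crosses_of_crosses_contractPair {p q : ℕ × ℕ} (hp : AvoidsInterval a b p)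
    (hq : AvoidsInterval a b q) (h : Crosses (contractPair a b p) (contractPair a b q)) :
    Crosses p q := by
  have := contract_spec hp.1; have := contract_spec hp.2
  have := contract_spec hq.1; have := contract_spec hq.2
  unfold Crosses at h ⊢
  simp only [contractPair] at h
  omega

lemma avoidsInterval_of_not_crosses {p q : ℕ × ℕ} (hqp : q ≠ p)
    (hle : p.2 - p.1 ≤ q.2 - q.1) (hnc : ¬Crosses q p) : AvoidsInterval p.1 p.2 q := by
  have : ¬(q.1 = p.1 ∧ q.2 = p.2) := fun h => hqp (Prod.ext h.1 h.2)
  unfold Crosses at hnc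
  unfold AvoidsInterval
  omega

end Contract

/-- Contracting the vertices strictly inside a shortest diagonal `p` turns `p` into a boundary
edge and the other diagonals into a noncrossing family of diagonals of a smaller polygon. -/
theorem card_le_of_isDiagonal_of_uncrossed {n : ℕ} {S : Finset (ℕ × ℕ)}
    (hd : ∀ p ∈ S, IsDiagonal n p) (hu : ∀ p ∈ S, Uncrossed S p) : S.card ≤ n - 3 := by
  induction n using Nat.strong_induction_on generalizing S with
  | _ n ih =>
  rcases S.eq_empty_or_nonempty with rfl | hne
  · simp
  obtain ⟨p, hpS, hmin⟩ := S.exists_min_image (fun p => p.2 - p.1) hne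
  obtain ⟨hgap, hpn, hnwrap⟩ := hd p hpS
  have havoid : ∀ q ∈ S.erase p, AvoidsInterval p.1 p.2 q := fun q hq =>
    have hqS := Finset.mem_of_mem_erase hq
    avoidsInterval_of_not_crosses (Finset.ne_of_mem_erase hq) (hmin q hqS) (hu p hpS q hqS)
  have hinj : Set.InjOn (contractPair p.1 p.2) (S.erase p) :=
    contractPair_injOn.mono fun q hq => havoid q hq
  have hcard := ih (n - (p.2 - p.1 - 1)) (by omega)
    (S := (S.erase p).image (contractPair p.1 p.2)) ?diag ?uncrossed
  case diag =>
    simp only [Finset.mem_image]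
    rintro _ ⟨q, hq, rfl⟩
    exact isDiagonal_contractPair (by omega) hpn
      (hd q (Finset.mem_of_mem_erase hq)) (Finset.ne_of_mem_erase hq) (havoid q hq)
  case uncrossed =>
    intro _ hq' _ hr' hcr
    obtain ⟨q, hq, rfl⟩ := Finset.mem_image.mp hq'
    obtain ⟨r, hr, rfl⟩ := Finset.mem_image.mp hr'
    exact hu q (Finset.mem_of_mem_erase hq) r (Finset.mem_of_mem_erase hr)
      (crosses_of_crosses_contractPair (havoid r hr) (havoid q hq) hcr)
  rw [Finset.card_image_of_injOn hinj, Finset.card_erase_of_mem hpS] at hcard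
  omega

namespace IsTriangulation

variable {n : ℕ} {S : Finset (ℕ × ℕ)}

lemma mem_of_uncrossed (hS : IsTriangulation n S) {p : ℕ × ℕ} (hp : IsDiagonal n p)
    (hu : Uncrossed S p) : p ∈ S := by
  by_contra hpS
  have hcard : (insert p S).card ≤ n - 3 := by
    refine card_le_of_isDiagonal_of_uncrossed ?_ ?_
    · simpa [hp] using hS.isDiagonal
    · simp only [Finset.forall_mem_insert, Uncrossed]
      exact ⟨⟨not_crosses_self p, hu⟩,
        fun q hq => ⟨crosses_comm.not.mp (hu q hq), hS.uncrossed q hq⟩⟩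
  rw [Finset.card_insert_of_notMem hpS, hS.card_eq] at hcard
  omega

/-- An uncrossed chord is a boundary edge or, by maximality, a member of `S`. -/
lemma not_crosses_of_uncrossed (hS : IsTriangulation n S) {p q : ℕ × ℕ} (hpu : Uncrossed S p)
    (hqu : Uncrossed S q) (hpn : p.2 < n) (hqn : q.2 < n) : ¬Crosses p q := by
  by_cases hpd : IsDiagonal n p
  · exact hqu p (hS.mem_of_uncrossed hpd hpu)
  · unfold IsDiagonal at hpd
    unfold Crosses
    omega

lemma eq_of_isCentralTriangle (hS : IsTriangulation n S) {a c b x y z : ℕ}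
    (h : IsCentralTriangle n S a c b) (h' : IsCentralTriangle n S x y z) :
    x = a ∧ y = c ∧ z = b := by
  obtain ⟨hac, hcb, hbn, hu_ac, hu_cb, hu_ab, hca_short, hbc_short, hab_short⟩ := h
  obtain ⟨hxy, hyz, hzn, hu_xy, hu_yz, hu_xz, hxy_short, hyz_short, hxz_short⟩ := h'
  have h_ab_xz := hS.not_crosses_of_uncrossed hu_ab hu_xz hbn hzn
  have h_xz_ac := hS.not_crosses_of_uncrossed hu_xz hu_ac hzn (by omega)
  have h_xz_cb := hS.not_crosses_of_uncrossed hu_xz hu_cb hzn hbn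
  have h_ab_xy := hS.not_crosses_of_uncrossed hu_ab hu_xy hbn (by omega)
  have h_ab_yz := hS.not_crosses_of_uncrossed hu_ab hu_yz hbn hzn
  unfold Crosses at h_ab_xz h_xz_ac h_xz_cb h_ab_xy h_ab_yz
  dsimp only at h_ab_xz h_xz_ac h_xz_cb h_ab_xy h_ab_yz
  obtain ⟨rfl, rfl⟩ : a = x ∧ b = z := by omega
  have h_ac_yb := hS.not_crosses_of_uncrossed hu_ac hu_yz (by omega) hbn
  have h_cb_ay := hS.not_crosses_of_uncrossed hu_cb hu_xy hbn (by omega)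
  unfold Crosses at h_ac_yb h_cb_ay
  dsimp only at h_ac_yb h_cb_ay
  omega

end IsTriangulation

lemma exists_apex {S : Finset (ℕ × ℕ)} (hS : ∀ p ∈ S, Uncrossed S p) {a b : ℕ} (hab : a + 2 ≤ b)
    (hu : Uncrossed S (a, b)) : ∃ c, a < c ∧ c < b ∧ Uncrossed S (a, c) ∧ Uncrossed S (c, b) := by
  classical
  have hex : ∃ c, a < c ∧ c < b ∧ Uncrossed S (c, b) :=
    ⟨b - 1, by omega, by omega, fun q _ => by unfold Crosses; omega⟩
  obtain ⟨hac, hcb, hu_cb⟩ := Nat.find_spec hex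
  refine ⟨Nat.find hex, hac, hcb, fun q hq hcr => ?_, hu_cb⟩
  have hq_ab := hu q hq
  have hq_cb := hu_cb q hq
  unfold Crosses at hcr hq_ab hq_cb
  rcases lt_trichotomy q.2 b with hlt | rfl | hgt
  · omega
  · -- `q` itself is an uncrossed chord ending at `b`, with an earlier start than the minimal one
    exact Nat.find_min hex (m := q.1) (by omega) ⟨by omega, by omega, hS q hq⟩
  · omega

lemma exists_isCentralTriangle_of_uncrossed {n : ℕ} {S : Finset (ℕ × ℕ)}
    (hS : ∀ p ∈ S, Uncrossed S p) (hodd : Odd n) {a b : ℕ} (hbn : b < n)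
    (hlong : n < 2 * (b - a)) (hu : Uncrossed S (a, b)) :
    ∃ a c b, IsCentralTriangle n S a c b := by
  obtain ⟨m, hm⟩ := hodd
  induction hk : b - a using Nat.strong_induction_on generalizing a b with
  | _ k ih =>
  obtain ⟨c, hac, hcb, hu_ac, hu_cb⟩ := exists_apex hS (by omega) hu
  by_cases hca : n < 2 * (c - a)
  · exact ih (c - a) (by omega) (by omega) hca hu_ac rfl
  by_cases hcb_long : n < 2 * (b - c)
  · exact ih (b - c) (by omega) hbn hcb_long hu_cb rfl
  -- `n` is odd, so neither half of the long chord has length exactly `n / 2`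
  exact ⟨a, c, b, hac, hcb, hbn, hu_ac, hu_cb, hu, by omega, by omega, by omega⟩

lemma IsTriangulation.exists_isCentralTriangle {n : ℕ} {S : Finset (ℕ × ℕ)}
    (hS : IsTriangulation n S) (hn : 3 ≤ n) (hodd : Odd n) :
    ∃ a c b, IsCentralTriangle n S a c b :=
  exists_isCentralTriangle_of_uncrossed hS.uncrossed hodd (a := 0) (b := n - 1) (by omega)
    (by omega)
    fun q hq => by have := (hS.isDiagonal q hq).2.1; unfold Crosses; omega

section FinPolygon

variable {n : ℕ} {T : Finset (Fin n × Fin n)}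

lemma IsOPT.isTriangulation (hT : IsOPT n T) :
    IsTriangulation n (T.image (Prod.map Fin.val Fin.val)) where
  isDiagonal := by
    simp only [Finset.mem_image]
    rintro _ ⟨p, hp, rfl⟩
    obtain ⟨-, hgap, hne⟩ := hT.1 p hp
    exact ⟨hgap, p.2.isLt, hne⟩
  uncrossed := by
    intro _ hp' _ hq'
    obtain ⟨p, hp, rfl⟩ := Finset.mem_image.mp hp'
    obtain ⟨q, hq, rfl⟩ := Finset.mem_image.mp hq'
    exact hT.2.1 q hq p hp
  card_eq := by
    rw [Finset.card_image_of_injective _ (Fin.val_injective.prodMap Fin.val_injective), hT.2.2]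

lemma IsOPT.polyEdge_iff_uncrossed (hT : IsOPT n T) {a b : Fin n} (hab : a < b) :
    polyEdge n T a b ↔ Uncrossed (T.image (Prod.map Fin.val Fin.val)) (a, b) := by
  have hS := hT.isTriangulation
  have hmem : (a, b) ∈ T ↔ ((a : ℕ), (b : ℕ)) ∈ T.image (Prod.map Fin.val Fin.val) :=
    (Fin.val_injective.prodMap Fin.val_injective).mem_finset_image.symm
  constructor
  · rintro (hadj | hwrap | hT_ab) q hq
    · unfold Crosses; omega
    · have := (hS.isDiagonal q hq).2.1; unfold Crosses; omega
    · exact hS.uncrossed _ (hmem.mp hT_ab) q hq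
  · intro hu
    by_cases hd : IsDiagonal n (a, b)
    · exact Or.inr (Or.inr (hmem.mpr (hS.mem_of_uncrossed hd hu)))
    · unfold IsDiagonal at hd
      unfold polyEdge
      have := b.isLt
      have : (a : ℕ) < b := hab
      omega

end FinPolygon

/-- For `n` odd, every outer planar triangulation of the `n`-gon has a unique
central triangle: a triangle each of whose three boundary arcs contains fewer
than `n/2` polygon edges. -/
theorem exists_unique_central_triangle (n : ℕ) (hn : 3 ≤ n) (hodd : Odd n)
    (T : Finset (Fin n × Fin n)) (hT : IsOPT n T) :
    ∃! t : Fin n × Fin n × Fin n,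
      t.1 < t.2.1 ∧ t.2.1 < t.2.2 ∧
      polyEdge n T t.1 t.2.1 ∧ polyEdge n T t.2.1 t.2.2 ∧ polyEdge n T t.1 t.2.2 ∧
      2 * (t.2.1.val - t.1.val) < n ∧
      2 * (t.2.2.val - t.2.1.val) < n ∧
      2 * (n - t.2.2.val + t.1.val) < n := by
  have hS := hT.isTriangulation
  obtain ⟨a, c, b, hcen⟩ := hS.exists_isCentralTriangle hn hodd
  have ⟨hac, hcb, hbn, hu_ac, hu_cb, hu_ab, hca_short, hbc_short, hab_short⟩ := hcen
  refine ⟨(⟨a, by omega⟩, ⟨c, by omega⟩, ⟨b, hbn⟩), ⟨hac, hcb,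
    (hT.polyEdge_iff_uncrossed hac).2 hu_ac, (hT.polyEdge_iff_uncrossed hcb).2 hu_cb,
    (hT.polyEdge_iff_uncrossed (hac.trans hcb)).2 hu_ab, hca_short, hbc_short, hab_short⟩, ?_⟩
  rintro ⟨x, y, z⟩ ⟨hxy, hyz, e_xy, e_yz, e_xz, hxy_short, hyz_short, hxz_short⟩
  obtain ⟨rfl, rfl, rfl⟩ := hS.eq_of_isCentralTriangle hcen
    ⟨hxy, hyz, z.isLt, (hT.polyEdge_iff_uncrossed hxy).1 e_xy,
      (hT.polyEdge_iff_uncrossed hyz).1 e_yz, (hT.polyEdge_iff_uncrossed (hxy.trans hyz)).1 e_xz,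
      hxy_short, hyz_short, hxz_short⟩
  rfl
end

section
/- For real vectors g indexed by vertices of a finite weighted graph, the Cauchy–Schwarz step of Cheeger's proof holds: (Σ_{{i,j}∈E} w_{ij}|g_i² − g_j²|)² ≤ (Σ_{{i,j}∈E} w_{ij}(g_i − g_j)²) · (Σ_{{i,j}∈E} w_{ij}(g_i + g_j)²), and moreover Σ_{{i,j}∈E} w_{ij}(g_i + g_j)² ≤ 2 Σ_i g_i² d_i when d_i ≥ Σ_{j≠i} w_{ij}. -/
open Finset

/-- The Cauchy–Schwarz step in Cheeger's proof (sums over unordered edges,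
written as halves of double sums):
`(Σ w_{ij}|g_i² − g_j²|)² ≤ (Σ w_{ij}(g_i − g_j)²)(Σ w_{ij}(g_i + g_j)²)`,
and `Σ w_{ij}(g_i + g_j)² ≤ 2 Σ g_i² d_i` when `d_i ≥ Σ_{j≠i} w_{ij}`. -/
theorem cheeger_cauchy_schwarz_step
    {V : Type*} [Fintype V] [DecidableEq V]
    (w : V → V → ℝ) (d : V → ℝ)
    (hsymm : ∀ i j, w i j = w j i)
    (hnn : ∀ i j, 0 ≤ w i j)
    (hd : ∀ i, (∑ j ∈ univ.erase i, w i j) ≤ d i)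
    (g : V → ℝ) :
    ((1/2) * ∑ i, ∑ j ∈ univ.erase i, w i j * |(g i)^2 - (g j)^2|)^2 ≤
      ((1/2) * ∑ i, ∑ j ∈ univ.erase i, w i j * (g i - g j)^2) *
      ((1/2) * ∑ i, ∑ j ∈ univ.erase i, w i j * (g i + g j)^2) ∧
    (1/2) * (∑ i, ∑ j ∈ univ.erase i, w i j * (g i + g j)^2) ≤
      2 * ∑ i, (g i)^2 * d i := by
  constructor
  · -- Cauchy–Schwarz over the sigma type of pairs
    set s : Finset (Σ _ : V, V) := univ.sigma (fun i => univ.erase i) with hs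
    have key : (∑ p ∈ s, (Real.sqrt (w p.1 p.2) * |g p.1 - g p.2|) *
          (Real.sqrt (w p.1 p.2) * |g p.1 + g p.2|))^2 ≤
        (∑ p ∈ s, (Real.sqrt (w p.1 p.2) * |g p.1 - g p.2|)^2) *
        (∑ p ∈ s, (Real.sqrt (w p.1 p.2) * |g p.1 + g p.2|)^2) :=
      Finset.sum_mul_sq_le_sq_mul_sq s _ _
    have e1 : ∀ p : Σ _ : V, V,
        (Real.sqrt (w p.1 p.2) * |g p.1 - g p.2|) *
          (Real.sqrt (w p.1 p.2) * |g p.1 + g p.2|)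
        = w p.1 p.2 * |(g p.1)^2 - (g p.2)^2| := by
      intro p
      have : (g p.1)^2 - (g p.2)^2 = (g p.1 - g p.2) * (g p.1 + g p.2) := by ring
      rw [this, abs_mul]
      rw [show (Real.sqrt (w p.1 p.2) * |g p.1 - g p.2|) *
          (Real.sqrt (w p.1 p.2) * |g p.1 + g p.2|)
        = (Real.sqrt (w p.1 p.2) * Real.sqrt (w p.1 p.2)) *
          (|g p.1 - g p.2| * |g p.1 + g p.2|) by ring,
        Real.mul_self_sqrt (hnn _ _)]
    have e2 : ∀ p : Σ _ : V, V,
        (Real.sqrt (w p.1 p.2) * |g p.1 - g p.2|)^2 = w p.1 p.2 * (g p.1 - g p.2)^2 := by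
      intro p
      rw [mul_pow, sq_abs, Real.sq_sqrt (hnn _ _)]
    have e3 : ∀ p : Σ _ : V, V,
        (Real.sqrt (w p.1 p.2) * |g p.1 + g p.2|)^2 = w p.1 p.2 * (g p.1 + g p.2)^2 := by
      intro p
      rw [mul_pow, sq_abs, Real.sq_sqrt (hnn _ _)]
    simp only [e1, e2, e3] at key
    rw [Finset.sum_sigma, Finset.sum_sigma, Finset.sum_sigma] at key
    nlinarith [key]
  · have step : ∀ i j : V, w i j * (g i + g j)^2 ≤ w i j * (2 * (g i)^2 + 2 * (g j)^2) := by
      intro i j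
      apply mul_le_mul_of_nonneg_left _ (hnn i j)
      nlinarith [sq_nonneg (g i - g j)]
    have h1 : (∑ i, ∑ j ∈ univ.erase i, w i j * (g i + g j)^2) ≤
        ∑ i, ∑ j ∈ univ.erase i, w i j * (2 * (g i)^2 + 2 * (g j)^2) :=
      Finset.sum_le_sum fun i _ => Finset.sum_le_sum fun j _ => step i j
    have hswap : (∑ i, ∑ j ∈ univ.erase i, w i j * (g j)^2) =
        ∑ i, ∑ j ∈ univ.erase i, w i j * (g i)^2 := by
      simp_rw [← Finset.filter_ne', Finset.sum_filter]
      rw [Finset.sum_comm]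
      refine Finset.sum_congr rfl fun i _ => Finset.sum_congr rfl fun j _ => ?_
      rw [hsymm j i]
      by_cases h : i = j <;> simp [h, Ne.symm, eq_comm]
    have h2 : (∑ i, ∑ j ∈ univ.erase i, w i j * (2 * (g i)^2 + 2 * (g j)^2)) =
        4 * ∑ i, (g i)^2 * (∑ j ∈ univ.erase i, w i j) := by
      have expand : ∀ i j : V, w i j * (2 * (g i)^2 + 2 * (g j)^2)
          = 2 * (w i j * (g i)^2) + 2 * (w i j * (g j)^2) := fun i j => by ring
      have inner : ∀ i : V, (∑ j ∈ univ.erase i, w i j * (g i)^2)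
          = (g i)^2 * ∑ j ∈ univ.erase i, w i j := by
        intro i; rw [Finset.mul_sum]; exact Finset.sum_congr rfl fun j _ => mul_comm _ _
      simp only [expand, Finset.sum_add_distrib, ← Finset.mul_sum, hswap, inner]
      ring
    have h3 : (∑ i, (g i)^2 * (∑ j ∈ univ.erase i, w i j)) ≤ ∑ i, (g i)^2 * d i :=
      Finset.sum_le_sum fun i _ => mul_le_mul_of_nonneg_left (hd i) (sq_nonneg _)
    linarith
end
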